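/- Let f : ℝⁿ → ℝⁿ be continuous, X ⊆ ℝⁿ closed, M ⊆ X closed, and T > 0. Suppose v : ℝ × ℝⁿ → ℝ is of class C¹ and w : ℝⁿ → ℝ satisfy: w(y) ≥ v(0,y) + 1 for all y ∈ X, ∂_t v(t,y) + ⟨∇_x v(t,y), f(y)⟩ ≤ 0 for all (t,y) ∈ [0,T] × X, and v(T,y) ≥ 0 for all y ∈ M. Then the region of attraction R_T^M is contained in {x₀ ∈ ℝⁿ : w(x₀) ≥ 1}. -/

import Mathlib

/-! A `C¹` function `v` that is nonincreasing along the flow of `f` inside `X` decreases along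
every trajectory `x` witnessing `x₀ ∈ R_T^M`, so `0 ≤ v (T, x T) ≤ v (0, x₀) ≤ w x₀ - 1`. -/

open Set

def RoA {n : ℕ} (f : EuclideanSpace ℝ (Fin n) → EuclideanSpace ℝ (Fin n))
    (X M : Set (EuclideanSpace ℝ (Fin n))) (T : ℝ) : Set (EuclideanSpace ℝ (Fin n)) :=
  {x₀ | ∃ x : ℝ → EuclideanSpace ℝ (Fin n), x 0 = x₀ ∧
    (∀ t ∈ Icc (0 : ℝ) T, HasDerivAt x (f (x t)) t) ∧
    (∀ t ∈ Icc (0 : ℝ) T, x t ∈ X) ∧ x T ∈ M}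

section ValueAlongCurve

variable {E : Type*} [NormedAddCommGroup E] [NormedSpace ℝ E]
  {v : ℝ × E → ℝ} {x : ℝ → E} {x' : ℝ → E}

theorem HasFDerivAt.hasDerivAt_comp_graph {L : ℝ × E →L[ℝ] ℝ} {t : ℝ}
    (hv : HasFDerivAt v L (t, x t)) (hx : HasDerivAt x (x' t) t) :
    HasDerivAt (fun s => v (s, x s)) (L (1, x' t)) t :=
  hv.comp_hasDerivAt t ((hasDerivAt_id t).prodMk hx)

theorem antitoneOn_comp_graph_of_fderiv_nonpos {a b : ℝ} (hv : Differentiable ℝ v)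
    (hx : ∀ t ∈ Icc a b, HasDerivAt x (x' t) t)
    (hdecr : ∀ t ∈ Icc a b, fderiv ℝ v (t, x t) (1, x' t) ≤ 0) :
    AntitoneOn (fun s => v (s, x s)) (Icc a b) := by
  have hder : ∀ t ∈ Icc a b,
      HasDerivAt (fun s => v (s, x s)) (fderiv ℝ v (t, x t) (1, x' t)) t :=
    fun t ht => (hv _).hasFDerivAt.hasDerivAt_comp_graph (hx t ht)
  exact antitoneOn_of_hasDerivWithinAt_nonpos (convex_Icc a b)
    (fun t ht => (hder t ht).continuousAt.continuousWithinAt)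
    (fun t ht => (hder t (interior_subset ht)).hasDerivWithinAt)
    (fun t ht => hdecr t (interior_subset ht))

end ValueAlongCurve

theorem sostab_stmt2_general {n : ℕ}
    (f : EuclideanSpace ℝ (Fin n) → EuclideanSpace ℝ (Fin n))
    (X : Set (EuclideanSpace ℝ (Fin n)))
    (M : Set (EuclideanSpace ℝ (Fin n)))
    (T : ℝ) (hT : 0 < T)
    (v : ℝ × EuclideanSpace ℝ (Fin n) → ℝ) (hv : ContDiff ℝ 1 v)
    (w : EuclideanSpace ℝ (Fin n) → ℝ)
    (hwv : ∀ y ∈ X, v (0, y) + 1 ≤ w y)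
    (hdecr : ∀ t ∈ Icc (0 : ℝ) T, ∀ y ∈ X, fderiv ℝ v (t, y) (1, f y) ≤ 0)
    (hvT : ∀ y ∈ M, 0 ≤ v (T, y)) :
    RoA f X M T ⊆ {x₀ | 1 ≤ w x₀} := by
  rintro _ ⟨x, rfl, hx', hxX, hxM⟩
  have h0 : (0 : ℝ) ∈ Icc 0 T := left_mem_Icc.mpr hT.le
  have hT' : T ∈ Icc 0 T := right_mem_Icc.mpr hT.le
  have hanti := antitoneOn_comp_graph_of_fderiv_nonpos (hv.differentiable one_ne_zero) hx'
    fun t ht => hdecr t ht (x t) (hxX t ht)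
  have hv_decr : v (T, x T) ≤ v (0, x 0) := hanti h0 hT' hT.le
  have hv_final : 0 ≤ v (T, x T) := hvT (x T) hxM
  have hw_init : v (0, x 0) + 1 ≤ w (x 0) := hwv (x 0) (hxX 0 h0)
  show 1 ≤ w (x 0)
  linarith

/-- if `v` is `C¹`, `w ≥ v(0,·) + 1` on `X`, `v` decreases along the flow of `f`
on `[0,T] × X` (the derivative `∂ₜ v + ⟨∇ₓ v, f⟩` along trajectories, encoded as the Fréchet
derivative of `v` applied to `(1, f y)`, is nonpositive there), and `v(T,·) ≥ 0` on `M`,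
then `R_T^M ⊆ {x₀ : w(x₀) ≥ 1}`. -/
theorem sostab_stmt2 {n : ℕ}
    (f : EuclideanSpace ℝ (Fin n) → EuclideanSpace ℝ (Fin n)) (hf : Continuous f)
    (X : Set (EuclideanSpace ℝ (Fin n))) (hX : IsClosed X)
    (M : Set (EuclideanSpace ℝ (Fin n))) (hM : IsClosed M) (hMX : M ⊆ X)
    (T : ℝ) (hT : 0 < T)
    (v : ℝ × EuclideanSpace ℝ (Fin n) → ℝ) (hv : ContDiff ℝ 1 v)
    (w : EuclideanSpace ℝ (Fin n) → ℝ)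
    (hwv : ∀ y ∈ X, v (0, y) + 1 ≤ w y)
    (hdecr : ∀ t ∈ Icc (0 : ℝ) T, ∀ y ∈ X, fderiv ℝ v (t, y) (1, f y) ≤ 0)
    (hvT : ∀ y ∈ M, 0 ≤ v (T, y)) :
    RoA f X M T ⊆ {x₀ | 1 ≤ w x₀} :=
  sostab_stmt2_general f X M T hT v hv w hwv hdecr hvT
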